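/- For every integer a, in the group Π(a, −1, −1, 1) the subgroup H generated by the images of s₁², s₂ and s₃ is a normal subgroup of index 2, and H is isomorphic to Π(2a, 1, 1, 1). In particular, Π(a, −1, −1, 1) contains a nilpotent subgroup of index 2, hence is virtually nilpotent. -/

import Mathlib

/-- The relator set of the presentation
`⟨s₁, s₂, s₃ ∣ s₁s₂s₁⁻¹ = s₃^a s₂^ε, s₁s₃s₁⁻¹ = s₃^{ε₁}, s₂s₃s₂⁻¹ = s₃^{ε₂}⟩`. -/
def PiRels (a ε ε₁ ε₂ : ℤ) : Set (FreeGroup (Fin 3)) :=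
  { FreeGroup.of 0 * FreeGroup.of 1 * (FreeGroup.of 0)⁻¹ * FreeGroup.of 1 ^ (-ε) *
      FreeGroup.of 2 ^ (-a),
    FreeGroup.of 0 * FreeGroup.of 2 * (FreeGroup.of 0)⁻¹ * FreeGroup.of 2 ^ (-ε₁),
    FreeGroup.of 1 * FreeGroup.of 2 * (FreeGroup.of 1)⁻¹ * FreeGroup.of 2 ^ (-ε₂) }

/-- The group `Π(a, ε, ε₁, ε₂)` with presentation
`⟨s₁, s₂, s₃ ∣ s₁s₂s₁⁻¹ = s₃^a s₂^ε, s₁s₃s₁⁻¹ = s₃^{ε₁}, s₂s₃s₂⁻¹ = s₃^{ε₂}⟩`. -/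
abbrev PiGroup (a ε ε₁ ε₂ : ℤ) : Type := PresentedGroup (PiRels a ε ε₁ ε₂)
/-- The subgroup `H = ⟨s₁², s₂, s₃⟩` of `Π(a, −1, −1, 1)`. -/
def Hsub (a : ℤ) : Subgroup (PiGroup a (-1) (-1) 1) :=
  Subgroup.closure
    {(PresentedGroup.of 0 : PiGroup a (-1) (-1) 1) ^ 2,
     (PresentedGroup.of 1 : PiGroup a (-1) (-1) 1),
     (PresentedGroup.of 2 : PiGroup a (-1) (-1) 1)}

/-!
Conjugation by `s₁` maps the generators `s₁², s₂, s₃` of `H` into `H`, and since `s₁² ∈ H` this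
makes `H` normal; then every element is `s₁ⁿ h` with `h ∈ H`, so `H` is the kernel of the character
`s₁ ↦ -1, s₂, s₃ ↦ 1` and has index 2.

The elements `s₁², s₂, s₃⁻¹` satisfy the relations of `Π(2a,1,1,1)`, which gives a homomorphism
onto `H`. In `Π(m,1,1,1)` the generator `t₃` is central, so every element has the normal form
`t₁ˣ t₂ʸ t₃ᶻ`, multiplied as in an integral Heisenberg group; this makes `Π(m,1,1,1)` a quotient of
that nilpotent group. Mapping further to the concrete model `ℤ ⋉ ℤ²` of `Π(a,-1,-1,1)`, the normal
form `(x, y, z)` lands on `(2x, y, -z)`, which proves injectivity.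
-/

section

variable {G : Type*} [Group G]

lemma zpow_eq_of_map_add (v : ℤ → G) (hv : ∀ m n, v (m + n) = v m * v n) (n : ℤ) :
    v 1 ^ n = v n := by
  let f : Multiplicative ℤ →* G := MonoidHom.mk' (v ∘ Multiplicative.toAdd) fun _ _ => hv _ _
  simpa [f, ← ofAdd_zsmul] using (map_zpow f (Multiplicative.ofAdd 1) n).symm

lemma zpow_mul_mul_zpow_neg_of_conj_eq {g h c : G} (hgc : Commute g c)
    (hconj : g * h * g⁻¹ = c * h) (n : ℤ) : g ^ n * h * g ^ (-n) = c ^ n * h := by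
  have hconj_inv : g⁻¹ * h * g = c⁻¹ * h :=
    calc g⁻¹ * h * g = g⁻¹ * c⁻¹ * (g * h * g⁻¹) * g := by rw [hconj]; group
      _ = c⁻¹ * g⁻¹ * (g * h * g⁻¹) * g := by rw [hgc.inv_inv.eq]
      _ = c⁻¹ * h := by group
  induction n using Int.induction_on with
  | zero => simp
  | succ n ih =>
    calc g ^ ((n : ℤ) + 1) * h * g ^ (-((n : ℤ) + 1))
          = MulAut.conj g (c ^ (n : ℤ) * h) := by rw [MulAut.conj_apply, ← ih]; group
      _ = c ^ (n : ℤ) * (c * h) := by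
          rw [map_mul, map_zpow, MulAut.conj_apply, MulAut.conj_apply, hgc.eq,
            mul_inv_cancel_right, hconj]
      _ = c ^ ((n : ℤ) + 1) * h := by group
  | pred n ih =>
    calc g ^ (-(n : ℤ) - 1) * h * g ^ (-(-(n : ℤ) - 1))
          = MulAut.conj g⁻¹ (c ^ (-(n : ℤ)) * h) := by rw [MulAut.conj_apply, ← ih]; group
      _ = c ^ (-(n : ℤ)) * (c⁻¹ * h) := by
          rw [map_mul, map_zpow, MulAut.conj_apply, MulAut.conj_apply, inv_inv, hgc.inv_left.eq,
            inv_mul_cancel_right, hconj_inv]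
      _ = c ^ (-(n : ℤ) - 1) * h := by group

lemma zpow_mul_zpow_mul_zpow_neg_of_conj_eq {g h c : G} (hgc : Commute g c) (hhc : Commute h c)
    (hconj : g * h * g⁻¹ = c * h) (x y : ℤ) :
    g ^ x * h ^ y * g ^ (-x) = c ^ (x * y) * h ^ y := by
  calc g ^ x * h ^ y * g ^ (-x) = (g ^ x * h * g ^ (-x)) ^ y := by
        rw [zpow_neg, conj_zpow]
    _ = c ^ (x * y) * h ^ y := by
        rw [zpow_mul_mul_zpow_neg_of_conj_eq hgc hconj, (hhc.symm.zpow_left x).mul_zpow, zpow_mul]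

lemma normalForm_mul {g h k : G} (hk : ∀ u, Commute k u) {m : ℤ}
    (hconj : g * h * g⁻¹ = k ^ m * h) (x y z x' y' z' : ℤ) :
    (g ^ x * h ^ y * k ^ z) * (g ^ x' * h ^ y' * k ^ z') =
      g ^ (x + x') * h ^ (y + y') * k ^ (z + z' - m * x' * y) := by
  have hcomm : ∀ (n : ℤ) u, k ^ n * u = u * k ^ n := fun n u => ((hk u).zpow_left n).eq
  have hswap : h ^ y * g ^ x' = k ^ (-(m * x' * y)) * (g ^ x' * h ^ y) := by
    have := zpow_mul_zpow_mul_zpow_neg_of_conj_eq ((hk g).zpow_left m).symm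
      ((hk h).zpow_left m).symm hconj x' y
    rw [← zpow_mul, ← mul_assoc] at this
    calc h ^ y * g ^ x' = (k ^ (m * x' * y))⁻¹ * (k ^ (m * x' * y) * h ^ y) * g ^ x' := by group
      _ = k ^ (-(m * x' * y)) * (g ^ x' * h ^ y) := by rw [← this]; group
  calc (g ^ x * h ^ y * k ^ z) * (g ^ x' * h ^ y' * k ^ z')
      = g ^ x * h ^ y * (k ^ z * (g ^ x' * h ^ y')) * k ^ z' := by group
    _ = g ^ x * (h ^ y * g ^ x') * h ^ y' * (k ^ z * k ^ z') := by rw [hcomm]; group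
    _ = (g ^ x * k ^ (-(m * x' * y))) * g ^ x' * h ^ y * h ^ y' * (k ^ z * k ^ z') := by
        rw [hswap]; group
    _ = k ^ (-(m * x' * y)) * (g ^ (x + x') * h ^ (y + y')) * k ^ (z + z') := by
        rw [← hcomm]; group
    _ = g ^ (x + x') * h ^ (y + y') * k ^ (z + z' - m * x' * y) := by
        rw [hcomm]; group

lemma Subgroup.mem_normalizer_of_conj_mem {H : Subgroup G} {g : G} {n : ℕ} (hn : n ≠ 0)
    (hgn : g ^ n ∈ H) (hconj : ∀ h ∈ H, g * h * g⁻¹ ∈ H) :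
    g ∈ Subgroup.normalizer (H : Set G) := by
  have hiter : ∀ k : ℕ, ∀ h ∈ H, g ^ k * h * (g ^ k)⁻¹ ∈ H := by
    intro k
    induction k with
    | zero => simp
    | succ k ih =>
      intro h hh
      simpa [pow_succ', mul_assoc] using hconj _ (ih h hh)
  refine Subgroup.mem_normalizer_iff.mpr fun h => ⟨hconj h, fun hh => ?_⟩
  obtain ⟨k, rfl⟩ := Nat.exists_eq_succ_of_ne_zero hn
  have h' : h = (g ^ (k + 1))⁻¹ * (g ^ k * (g * h * g⁻¹) * (g ^ k)⁻¹) * g ^ (k + 1) := by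
    group
  rw [h']
  exact H.mul_mem (H.mul_mem (H.inv_mem hgn) (hiter k _ hh)) hgn

lemma Subgroup.ker_eq_of_sup_zpowers_eq_top {H : Subgroup G} [H.Normal] {g : G}
    (htop : Subgroup.zpowers g ⊔ H = ⊤) (hg : g ^ 2 ∈ H) {χ : G →* ℤˣ} (hχ : χ g = -1)
    (hH : H ≤ χ.ker) : χ.ker = H := by
  refine le_antisymm (fun x hx => ?_) hH
  have hx' : x ∈ ((Subgroup.zpowers g ⊔ H : Subgroup G) : Set G) := by simp [htop]
  rw [Subgroup.mul_normal] at hx'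
  obtain ⟨_, ⟨n, rfl⟩, h, hh, rfl⟩ := hx'
  have heven : Even n := by
    rwa [MonoidHom.mem_ker, map_mul, map_zpow, hχ, hH hh, mul_one, ← Int.negOnePow_def,
      Int.negOnePow_eq_one_iff] at hx
  obtain ⟨k, rfl⟩ := heven
  dsimp only
  rw [show g ^ (k + k) = (g ^ 2) ^ k by rw [← two_mul, zpow_mul, zpow_ofNat]]
  exact H.mul_mem (H.zpow_mem hg k) hh

end

namespace PiGroup

variable {a ε ε₁ ε₂ : ℤ} {G : Type*} [Group G]

def lift (x y z : G) (h₁ : x * y * x⁻¹ = z ^ a * y ^ ε) (h₂ : x * z * x⁻¹ = z ^ ε₁)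
    (h₃ : y * z * y⁻¹ = z ^ ε₂) : PiGroup a ε ε₁ ε₂ →* G :=
  PresentedGroup.toGroup (f := ![x, y, z]) <| by
    rintro r (rfl | rfl | rfl)
    · simp [h₁]
    · simp [h₂]
    · simp [h₃]

section
variable {x y z : G} {h₁ : x * y * x⁻¹ = z ^ a * y ^ ε} {h₂ : x * z * x⁻¹ = z ^ ε₁}
  {h₃ : y * z * y⁻¹ = z ^ ε₂}

@[simp] lemma lift_of_zero : lift x y z h₁ h₂ h₃ (.of 0) = x := PresentedGroup.toGroup.of _
@[simp] lemma lift_of_one : lift x y z h₁ h₂ h₃ (.of 1) = y := PresentedGroup.toGroup.of _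
@[simp] lemma lift_of_two : lift x y z h₁ h₂ h₃ (.of 2) = z := PresentedGroup.toGroup.of _
end

lemma eq_top_of_of_mem {K : Subgroup (PiGroup a ε ε₁ ε₂)} (h₀ : .of 0 ∈ K) (h₁ : .of 1 ∈ K)
    (h₂ : .of 2 ∈ K) : K = ⊤ :=
  eq_top_iff.mpr fun g _ => PresentedGroup.generated_by _ K (by
    intro j; fin_cases j <;> assumption) g

variable (a ε ε₁ ε₂)

lemma rel₁ : (.of 0 * .of 1 * (.of 0)⁻¹ : PiGroup a ε ε₁ ε₂) = .of 2 ^ a * .of 1 ^ ε := by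
  have h := PresentedGroup.one_of_mem (rels := PiRels a ε ε₁ ε₂) (Or.inl rfl)
  change (.of 0 * .of 1 * (.of 0)⁻¹ * .of 1 ^ (-ε) * .of 2 ^ (-a) : PiGroup a ε ε₁ ε₂) = 1 at h
  rw [← mul_inv_eq_one, ← h]
  group

lemma rel₂ : (.of 0 * .of 2 * (.of 0)⁻¹ : PiGroup a ε ε₁ ε₂) = .of 2 ^ ε₁ := by
  have h := PresentedGroup.one_of_mem (rels := PiRels a ε ε₁ ε₂) (Or.inr (Or.inl rfl))
  change (.of 0 * .of 2 * (.of 0)⁻¹ * .of 2 ^ (-ε₁) : PiGroup a ε ε₁ ε₂) = 1 at h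
  rw [← mul_inv_eq_one, ← h]
  group

lemma rel₃ : (.of 1 * .of 2 * (.of 1)⁻¹ : PiGroup a ε ε₁ ε₂) = .of 2 ^ ε₂ := by
  have h := PresentedGroup.one_of_mem (rels := PiRels a ε ε₁ ε₂) (Or.inr (Or.inr rfl))
  change (.of 1 * .of 2 * (.of 1)⁻¹ * .of 2 ^ (-ε₂) : PiGroup a ε ε₁ ε₂) = 1 at h
  rw [← mul_inv_eq_one, ← h]
  group

end PiGroup

/-- `⟨x, y, z⟩` stands for the normal form `t₁ˣ t₂ʸ t₃ᶻ` of `Π(m,1,1,1)`, cf. `normalForm_mul`. -/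
@[ext] structure Heis (m : ℤ) where
  x : ℤ
  y : ℤ
  z : ℤ

namespace Heis
variable {m : ℤ}

instance : Mul (Heis m) := ⟨fun p q => ⟨p.x + q.x, p.y + q.y, p.z + q.z - m * q.x * p.y⟩⟩
instance : One (Heis m) := ⟨⟨0, 0, 0⟩⟩
instance : Inv (Heis m) := ⟨fun p => ⟨-p.x, -p.y, -p.z - m * p.x * p.y⟩⟩

@[simp] lemma mul_x (p q : Heis m) : (p * q).x = p.x + q.x := rfl
@[simp] lemma mul_y (p q : Heis m) : (p * q).y = p.y + q.y := rfl
@[simp] lemma mul_z (p q : Heis m) : (p * q).z = p.z + q.z - m * q.x * p.y := rfl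
@[simp] lemma one_x : (1 : Heis m).x = 0 := rfl
@[simp] lemma one_y : (1 : Heis m).y = 0 := rfl
@[simp] lemma one_z : (1 : Heis m).z = 0 := rfl
@[simp] lemma inv_x (p : Heis m) : p⁻¹.x = -p.x := rfl
@[simp] lemma inv_y (p : Heis m) : p⁻¹.y = -p.y := rfl
@[simp] lemma inv_z (p : Heis m) : p⁻¹.z = -p.z - m * p.x * p.y := rfl

instance : Group (Heis m) where
  mul_assoc p q r := by ext <;> simp only [mul_x, mul_y, mul_z] <;> ring
  one_mul p := by ext <;> simp
  mul_one p := by ext <;> simp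
  inv_mul_cancel p := by
    ext <;> simp only [mul_x, mul_y, mul_z, inv_x, inv_y, inv_z, one_x, one_y, one_z] <;> ring

def projXY : Heis m →* Multiplicative (ℤ × ℤ) where
  toFun p := .ofAdd (p.x, p.y)
  map_one' := rfl
  map_mul' _ _ := rfl

instance : Group.IsNilpotent (Heis m) := by
  refine Subgroup.isNilpotent_of_ker_le_center projXY fun p hp =>
    Subgroup.mem_center_iff.mpr fun q => ?_
  obtain ⟨hx, hy⟩ : p.x = 0 ∧ p.y = 0 := by simpa [projXY] using hp
  ext <;> simp only [mul_x, mul_y, mul_z, hx, hy] <;> ring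

end Heis

section
variable (m : ℤ)

lemma PiGroup.commute_of_two (u : PiGroup m 1 1 1) : Commute (.of 2) u := by
  have htop : Subgroup.centralizer {(.of 2 : PiGroup m 1 1 1)} = ⊤ := by
    have h₂ := PiGroup.rel₂ m 1 1 1
    have h₃ := PiGroup.rel₃ m 1 1 1
    rw [zpow_one, mul_inv_eq_iff_eq_mul] at h₂ h₃
    exact PiGroup.eq_top_of_of_mem (Subgroup.mem_centralizer_singleton_iff.mpr h₂)
      (Subgroup.mem_centralizer_singleton_iff.mpr h₃)
      (Subgroup.mem_centralizer_singleton_iff.mpr rfl)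
  exact (Subgroup.mem_centralizer_singleton_iff.mp (htop ▸ Subgroup.mem_top u)).symm

def Heis.toPiGroup : Heis m →* PiGroup m 1 1 1 where
  toFun p := .of 0 ^ p.x * .of 1 ^ p.y * .of 2 ^ p.z
  map_one' := by simp
  map_mul' p q := by
    have h₁ := PiGroup.rel₁ m 1 1 1
    rw [zpow_one] at h₁
    exact (normalForm_mul (PiGroup.commute_of_two m) h₁ p.x p.y p.z q.x q.y q.z).symm

lemma Heis.toPiGroup_surjective : Function.Surjective (Heis.toPiGroup m) := by
  rw [← MonoidHom.range_eq_top]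
  refine PiGroup.eq_top_of_of_mem ⟨⟨1, 0, 0⟩, ?_⟩ ⟨⟨0, 1, 0⟩, ?_⟩ ⟨⟨0, 0, 1⟩, ?_⟩ <;>
    simp [Heis.toPiGroup]

end

/-- A model of `Π(a,-1,-1,1)`: `⟨x, y, z⟩` stands for `s₁ˣ s₂ʸ s₃ᶻ`, and the signs `(-1)ˣ` record
that conjugation by `s₁` inverts `s₃` and inverts `s₂` modulo `⟨s₃⟩`. -/
@[ext] structure TwistedHeis (a : ℤ) where
  x : ℤ
  y : ℤ
  z : ℤ

namespace TwistedHeis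
variable {a : ℤ}

instance : Mul (TwistedHeis a) :=
  ⟨fun p q =>
    ⟨p.x + q.x, q.x.negOnePow * p.y + q.y, q.x.negOnePow * (a * q.x * p.y + p.z) + q.z⟩⟩
instance : One (TwistedHeis a) := ⟨⟨0, 0, 0⟩⟩
instance : Inv (TwistedHeis a) :=
  ⟨fun p => ⟨-p.x, -(p.x.negOnePow * p.y), p.x.negOnePow * (a * p.x * p.y - p.z)⟩⟩

@[simp] lemma mul_x (p q : TwistedHeis a) : (p * q).x = p.x + q.x := rfl
@[simp] lemma mul_y (p q : TwistedHeis a) : (p * q).y = q.x.negOnePow * p.y + q.y := rfl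
@[simp] lemma mul_z (p q : TwistedHeis a) :
    (p * q).z = q.x.negOnePow * (a * q.x * p.y + p.z) + q.z := rfl
@[simp] lemma one_x : (1 : TwistedHeis a).x = 0 := rfl
@[simp] lemma one_y : (1 : TwistedHeis a).y = 0 := rfl
@[simp] lemma one_z : (1 : TwistedHeis a).z = 0 := rfl
@[simp] lemma inv_x (p : TwistedHeis a) : p⁻¹.x = -p.x := rfl
@[simp] lemma inv_y (p : TwistedHeis a) : p⁻¹.y = -(p.x.negOnePow * p.y) := rfl
@[simp] lemma inv_z (p : TwistedHeis a) : p⁻¹.z = p.x.negOnePow * (a * p.x * p.y - p.z) := rfl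

instance : Group (TwistedHeis a) where
  mul_assoc p q r := by
    ext <;> simp only [mul_x, mul_y, mul_z, Int.negOnePow_add, Units.val_mul] <;> ring
  one_mul p := by ext <;> simp
  mul_one p := by ext <;> simp
  inv_mul_cancel p := by
    have h : (p.x.negOnePow : ℤ) * p.x.negOnePow = 1 := by
      rw [← Units.val_mul, Int.units_mul_self, Units.val_one]
    ext <;> simp only [mul_x, mul_y, mul_z, inv_x, inv_y, inv_z, one_x, one_y, one_z]
    · ring
    · linear_combination (-p.y) * h
    · linear_combination (-p.z) * h

lemma zpow_x (n : ℤ) : (⟨1, 0, 0⟩ : TwistedHeis a) ^ n = ⟨n, 0, 0⟩ :=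
  zpow_eq_of_map_add (fun n => (⟨n, 0, 0⟩ : TwistedHeis a)) (fun _ _ => by ext <;> simp) n

lemma zpow_y (n : ℤ) : (⟨0, 1, 0⟩ : TwistedHeis a) ^ n = ⟨0, n, 0⟩ :=
  zpow_eq_of_map_add (fun n => (⟨0, n, 0⟩ : TwistedHeis a)) (fun _ _ => by ext <;> simp) n

lemma zpow_z (n : ℤ) : (⟨0, 0, 1⟩ : TwistedHeis a) ^ n = ⟨0, 0, n⟩ :=
  zpow_eq_of_map_add (fun n => (⟨0, 0, n⟩ : TwistedHeis a)) (fun _ _ => by ext <;> simp) n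

end TwistedHeis

section
variable (a : ℤ)

local notation "s₁" => (PresentedGroup.of 0 : PiGroup a (-1) (-1) 1)
local notation "s₂" => (PresentedGroup.of 1 : PiGroup a (-1) (-1) 1)
local notation "s₃" => (PresentedGroup.of 2 : PiGroup a (-1) (-1) 1)

lemma conj_s₁_s₂ : MulAut.conj s₁ s₂ = s₃ ^ a * s₂⁻¹ := by
  simpa using PiGroup.rel₁ a (-1) (-1) 1

lemma conj_s₁_s₃ : MulAut.conj s₁ s₃ = s₃⁻¹ := by
  simpa using PiGroup.rel₂ a (-1) (-1) 1

lemma commute_s₂_s₃ : Commute s₂ s₃ :=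
  commute_iff_eq _ _ |>.mpr <| by
    simpa [mul_inv_eq_iff_eq_mul] using PiGroup.rel₃ a (-1) (-1) 1

def toTwistedHeis : PiGroup a (-1) (-1) 1 →* TwistedHeis a :=
  PiGroup.lift ⟨1, 0, 0⟩ ⟨0, 1, 0⟩ ⟨0, 0, 1⟩
    (by ext <;> simp [TwistedHeis.zpow_z]) (by ext <;> simp) (by ext <;> simp)

lemma sq_s₁_conj_s₂ : s₁ ^ 2 * s₂ * (s₁ ^ 2)⁻¹ = (s₃⁻¹) ^ (2 * a) * s₂ ^ (1 : ℤ) :=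
  calc s₁ ^ 2 * s₂ * (s₁ ^ 2)⁻¹ = MulAut.conj s₁ (MulAut.conj s₁ s₂) := by
        simp only [MulAut.conj_apply, sq]; group
    _ = s₃ ^ (-a) * (s₂ * s₃ ^ (-a)) := by
        rw [conj_s₁_s₂, map_mul, map_zpow, map_inv, conj_s₁_s₃, conj_s₁_s₂]; group
    _ = (s₃⁻¹) ^ (2 * a) * s₂ ^ (1 : ℤ) := by
        rw [((commute_s₂_s₃ a).zpow_right (-a)).eq]; group

lemma sq_s₁_conj_s₃_inv : s₁ ^ 2 * s₃⁻¹ * (s₁ ^ 2)⁻¹ = (s₃⁻¹) ^ (1 : ℤ) :=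
  calc s₁ ^ 2 * s₃⁻¹ * (s₁ ^ 2)⁻¹ = MulAut.conj s₁ (MulAut.conj s₁ s₃)⁻¹ := by
        simp only [MulAut.conj_apply, sq]; group
    _ = (s₃⁻¹) ^ (1 : ℤ) := by rw [conj_s₁_s₃, inv_inv, conj_s₁_s₃, zpow_one]

lemma s₂_conj_s₃_inv : s₂ * s₃⁻¹ * s₂⁻¹ = (s₃⁻¹) ^ (1 : ℤ) := by
  rw [(commute_s₂_s₃ a).inv_right.eq]; group

def sqEmbedding : PiGroup (2 * a) 1 1 1 →* PiGroup a (-1) (-1) 1 :=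
  PiGroup.lift (s₁ ^ 2) s₂ s₃⁻¹ (sq_s₁_conj_s₂ a) (sq_s₁_conj_s₃_inv a) (s₂_conj_s₃_inv a)

lemma toTwistedHeis_sqEmbedding_toPiGroup (p : Heis (2 * a)) :
    toTwistedHeis a (sqEmbedding a (Heis.toPiGroup (2 * a) p)) = ⟨2 * p.x, p.y, -p.z⟩ := by
  simp only [Heis.toPiGroup, sqEmbedding, toTwistedHeis, MonoidHom.coe_mk, OneHom.coe_mk,
    map_mul, map_zpow, map_pow, map_inv, PiGroup.lift_of_zero, PiGroup.lift_of_one,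
    PiGroup.lift_of_two]
  rw [← zpow_natCast, ← zpow_mul, inv_zpow', TwistedHeis.zpow_x, TwistedHeis.zpow_y,
    TwistedHeis.zpow_z]
  ext <;> simp

lemma sqEmbedding_injective : Function.Injective (sqEmbedding a) := by
  intro g g' h
  obtain ⟨p, rfl⟩ := Heis.toPiGroup_surjective (2 * a) g
  obtain ⟨p', rfl⟩ := Heis.toPiGroup_surjective (2 * a) g'
  have := congrArg (toTwistedHeis a) h
  simp only [toTwistedHeis_sqEmbedding_toPiGroup, TwistedHeis.mk.injEq] at this
  congr 1
  ext <;> omega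

lemma sq_s₁_mem_Hsub : s₁ ^ 2 ∈ Hsub a := Subgroup.subset_closure (by simp)
lemma s₂_mem_Hsub : s₂ ∈ Hsub a := Subgroup.subset_closure (by simp)
lemma s₃_mem_Hsub : s₃ ∈ Hsub a := Subgroup.subset_closure (by simp)

lemma range_sqEmbedding : (sqEmbedding a).range = Hsub a := by
  refine le_antisymm ?_ ?_
  · rw [MonoidHom.range_eq_map, Subgroup.map_le_iff_le_comap, top_le_iff]
    refine PiGroup.eq_top_of_of_mem ?_ ?_ ?_ <;>
      simp [sqEmbedding, sq_s₁_mem_Hsub, s₂_mem_Hsub, s₃_mem_Hsub]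
  · rw [Hsub, Subgroup.closure_le]
    rintro _ (rfl | rfl | rfl)
    · exact ⟨.of 0, by simp [sqEmbedding]⟩
    · exact ⟨.of 1, by simp [sqEmbedding]⟩
    · exact ⟨(.of 2)⁻¹, by simp [sqEmbedding]⟩

lemma conj_s₁_mem_Hsub {h : PiGroup a (-1) (-1) 1} (hh : h ∈ Hsub a) :
    s₁ * h * s₁⁻¹ ∈ Hsub a := by
  suffices Hsub a ≤ (Hsub a).comap (MulAut.conj s₁).toMonoidHom by simpa using this hh
  rw [Hsub, Subgroup.closure_le]
  rintro _ (rfl | rfl | rfl) <;> simp only [SetLike.mem_coe, Subgroup.mem_comap,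
    MulEquiv.coe_toMonoidHom]
  · rw [MulAut.conj_apply, (Commute.self_pow _ 2).eq, mul_inv_cancel_right]
    exact sq_s₁_mem_Hsub a
  · rw [conj_s₁_s₂]
    exact mul_mem (zpow_mem (s₃_mem_Hsub a) a) (inv_mem (s₂_mem_Hsub a))
  · rw [conj_s₁_s₃]
    exact inv_mem (s₃_mem_Hsub a)

instance Hsub_normal : (Hsub a).Normal := by
  rw [← Subgroup.normalizer_eq_top_iff]
  exact PiGroup.eq_top_of_of_mem
    (Subgroup.mem_normalizer_of_conj_mem two_ne_zero (sq_s₁_mem_Hsub a)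
      fun _ => conj_s₁_mem_Hsub a)
    (Subgroup.le_normalizer (s₂_mem_Hsub a)) (Subgroup.le_normalizer (s₃_mem_Hsub a))

def parity : PiGroup a (-1) (-1) 1 →* ℤˣ :=
  PiGroup.lift (-1) 1 1 (by simp) (by simp) (by simp)

lemma ker_parity : (parity a).ker = Hsub a := by
  refine Subgroup.ker_eq_of_sup_zpowers_eq_top ?_ (sq_s₁_mem_Hsub a) (by simp [parity]) ?_
  · exact PiGroup.eq_top_of_of_mem (Subgroup.mem_sup_left (Subgroup.mem_zpowers _))
      (Subgroup.mem_sup_right (s₂_mem_Hsub a)) (Subgroup.mem_sup_right (s₃_mem_Hsub a))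
  · rw [Hsub, Subgroup.closure_le]
    rintro _ (rfl | rfl | rfl) <;> simp [parity]

lemma index_Hsub : (Hsub a).index = 2 := by
  have hsurj : Function.Surjective (parity a) := fun u => by
    rcases Int.units_eq_one_or u with rfl | rfl
    · exact ⟨1, map_one _⟩
    · exact ⟨.of 0, by simp [parity]⟩
  rw [← ker_parity, Subgroup.index_ker, MonoidHom.range_eq_top_of_surjective _ hsurj,
    Subgroup.card_top, Nat.card_eq_fintype_card, Fintype.card_units_int]

end

/-- In `Π(a, −1, −1, 1)`, the subgroup `H = ⟨s₁², s₂, s₃⟩` is normal of index 2 and is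
isomorphic to `Π(2a, 1, 1, 1)`; in particular `Π(a, −1, −1, 1)` contains a nilpotent
subgroup of index 2, hence is virtually nilpotent. -/
theorem PiGroup_neg_virtually_nilpotent (a : ℤ) :
    (Hsub a).Normal ∧ (Hsub a).index = 2 ∧
    Nonempty (↥(Hsub a) ≃* PiGroup (2 * a) 1 1 1) ∧
    ∃ K : Subgroup (PiGroup a (-1) (-1) 1), Group.IsNilpotent ↥K ∧ K.index = 2 := by
  have e : PiGroup (2 * a) 1 1 1 ≃* Hsub a :=
    (MonoidHom.ofInjective (sqEmbedding_injective a)).trans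
      (MulEquiv.subgroupCongr (range_sqEmbedding a))
  have : Group.IsNilpotent (PiGroup (2 * a) 1 1 1) :=
    Group.nilpotent_of_surjective _ (Heis.toPiGroup_surjective (2 * a))
  exact ⟨Hsub_normal a, index_Hsub a, ⟨e.symm⟩,
    Hsub a, Group.nilpotent_of_mulEquiv e, index_Hsub a⟩
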